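/- arXiv:1711.02338 — 2 statements merged into one kernel-verified Lean document; each statement's English description precedes it below -/
import Mathlib

section
/- Fix q with 1 ≤ q < 4 and set r = (1/π) * arccos(√q / 2). For θ ∈ (0, π) define y(θ) = √q * sin(r(π − θ)) / sin(rθ). Then for all a, b, c ∈ (0, π) with a + b + c = 2π, one has y(a)y(b)y(c) + y(a)y(b) + y(b)y(c) + y(c)y(a) = q. -/
open Real

/-!
With `S = r π = arccos (√q / 2)` one has `√q = 2 cos S`, and the rescaled angles `A = r a`,
`B = r b`, `C = r c` lie in `(0, S) ⊆ (0, π)` and sum to `2 S`. After clearing the (positive)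
denominators `sin A, sin B, sin C`, the claim becomes a trigonometric identity in `A, B, S`, which
the addition formulas reduce to a polynomial identity modulo `sin² S + cos² S = 1`.
-/

/-- `y θ = isoradialWeight (r * π) (r * θ)`, since `√q = 2 cos (r π)`. -/
noncomputable def isoradialWeight (S x : ℝ) : ℝ :=
  2 * cos S * sin (S - x) / sin x

lemma sin_star_triangle (S A B : ℝ) :
    2 * cos S * (sin (S - A) * sin (S - B) * sin (A + B - S))
      + sin (S - A) * sin (S - B) * sin (2 * S - A - B)
      + sin (S - B) * sin (A + B - S) * sin A
      + sin (A + B - S) * sin (S - A) * sin B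
    = sin A * sin B * sin (2 * S - A - B) := by
  simp only [sin_sub, sin_add, cos_sub, cos_add, sin_two_mul, cos_two_mul]
  linear_combination (sin A * cos A * sin B ^ 2 + sin A ^ 2 * sin B * cos B) *
    (sin_sq_add_cos_sq S)

lemma isoradialWeight_star_triangle {S A B C : ℝ} (hA : sin A ≠ 0) (hB : sin B ≠ 0)
    (hC : sin C ≠ 0) (hABC : A + B + C = 2 * S) :
    isoradialWeight S A * isoradialWeight S B * isoradialWeight S C
      + isoradialWeight S A * isoradialWeight S B + isoradialWeight S B * isoradialWeight S C
      + isoradialWeight S C * isoradialWeight S A = 4 * cos S ^ 2 := by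
  obtain rfl : C = 2 * S - A - B := by linarith
  have hSC : S - (2 * S - A - B) = A + B - S := by ring
  unfold isoradialWeight
  rw [hSC]
  field_simp
  linear_combination (4 * cos S ^ 2) * sin_star_triangle S A B

lemma sin_mul_pos_of_mem_Ioo {r θ : ℝ} (hr : 0 < r) (hrπ : r * π ≤ π)
    (hθ : θ ∈ Set.Ioo 0 π) : 0 < sin (r * θ) :=
  sin_pos_of_pos_of_lt_pi (mul_pos hr hθ.1)
    ((mul_lt_mul_of_pos_left hθ.2 hr).trans_le hrπ)

theorem stmt_1 (q : ℝ) (hq1 : 1 ≤ q) (hq4 : q < 4)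
    (r : ℝ) (hr : r = (1 / π) * arccos (sqrt q / 2))
    (y : ℝ → ℝ) (hy : ∀ θ ∈ Set.Ioo (0:ℝ) π, y θ = sqrt q * sin (r * (π - θ)) / sin (r * θ))
    (a b c : ℝ) (ha : a ∈ Set.Ioo (0:ℝ) π) (hb : b ∈ Set.Ioo (0:ℝ) π)
    (hc : c ∈ Set.Ioo (0:ℝ) π) (habc : a + b + c = 2 * π) :
    y a * y b * y c + y a * y b + y b * y c + y c * y a = q := by
  set S := arccos (sqrt q / 2)
  have hsqrt : sqrt q / 2 < 1 := by
    rw [div_lt_one two_pos, sqrt_lt' two_pos]; linarith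
  have hcos : sqrt q = 2 * cos S := by
    rw [cos_arccos (by linarith [sqrt_nonneg q]) hsqrt.le]; ring
  have hrπ : r * π = S := by rw [hr]; field_simp
  have hr0 : 0 < r := by
    have hS : 0 < S := arccos_pos.mpr hsqrt
    exact pos_of_mul_pos_left (hrπ ▸ hS) pi_pos.le
  have hq : q = 4 * cos S ^ 2 := by
    rw [← sq_sqrt (by linarith : 0 ≤ q), hcos]; ring
  have hy' : ∀ θ ∈ Set.Ioo (0:ℝ) π, y θ = isoradialWeight S (r * θ) := by
    intro θ hθ
    rw [hy θ hθ, isoradialWeight, hcos, ← hrπ, mul_sub]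
  have hsin : ∀ θ ∈ Set.Ioo (0:ℝ) π, sin (r * θ) ≠ 0 := fun θ hθ =>
    (sin_mul_pos_of_mem_Ioo hr0 (hrπ ▸ arccos_le_pi _) hθ).ne'
  rw [hy' a ha, hy' b hb, hy' c hc,
    isoradialWeight_star_triangle (hsin a ha) (hsin b hb) (hsin c hc)
      (by rw [← hrπ]; linear_combination r * habc), hq]
end

section
/- Fix q > 4 and set r = (1/π) * arccosh(√q / 2) (so cosh(rπ) = √q/2). For θ ∈ (0, π) define y(θ) = √q * sinh(r(π − θ)) / sinh(rθ). Then for all a, b, c ∈ (0, π) with a + b + c = 2π, one has y(a)y(b)y(c) + y(a)y(b) + y(b)y(c) + y(c)y(a) = q. -/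
/-!
In the variables `p = e^{2rπ}` and `x = e^{2rθ}` the weight becomes the rational function
`y = (p + 1)(p - x) / (p(x - 1))` and `q = (2 cosh rπ)² = (p + 1)² / p`, while the angle
condition `a + b + c = 2π` becomes `x_a x_b x_c = p²`. The identity is then a polynomial
identity modulo this single relation.
-/

open Real

/-- `arccosh x = log (x + √(x² − 1))`, the inverse of `cosh` on `[1, ∞)`. -/
noncomputable def arccosh (x : ℝ) : ℝ := Real.log (x + Real.sqrt (x ^ 2 - 1))

noncomputable def hypWeight (u t : ℝ) : ℝ := 2 * cosh u * sinh (u - t) / sinh t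

noncomputable def rationalWeight (p x : ℝ) : ℝ := (p + 1) * (p - x) / (p * (x - 1))

theorem rationalWeight_identity {p a b c : ℝ} (hp : p ≠ 0) (ha : a ≠ 1) (hb : b ≠ 1)
    (hc : c ≠ 1) (habc : a * b * c = p ^ 2) :
    rationalWeight p a * rationalWeight p b * rationalWeight p c +
      rationalWeight p a * rationalWeight p b + rationalWeight p b * rationalWeight p c +
      rationalWeight p c * rationalWeight p a = (p + 1) ^ 2 / p := by
  have ha' : a - 1 ≠ 0 := sub_ne_zero.mpr ha
  have hb' : b - 1 ≠ 0 := sub_ne_zero.mpr hb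
  have hc' : c - 1 ≠ 0 := sub_ne_zero.mpr hc
  unfold rationalWeight
  field_simp
  linear_combination (2 * p ^ 2 - p ^ 4 - 1) * habc

theorem exp_two_mul (x : ℝ) : exp (2 * x) = exp x ^ 2 := by
  rw [two_mul, exp_add, sq]

theorem hypWeight_eq_rationalWeight (u : ℝ) {t : ℝ} (ht : t ≠ 0) :
    hypWeight u t = rationalWeight (exp (2 * u)) (exp (2 * t)) := by
  have hx : exp (2 * t) - 1 ≠ 0 := by simpa [sub_eq_zero, exp_eq_one_iff] using ht
  rw [exp_two_mul] at hx ⊢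
  simp only [hypWeight, rationalWeight, cosh_eq, sinh_eq, exp_neg, exp_sub, exp_two_mul]
  field_simp

theorem two_cosh_sq (u : ℝ) : (2 * cosh u) ^ 2 = (exp (2 * u) + 1) ^ 2 / exp (2 * u) := by
  rw [cosh_eq, exp_neg, exp_two_mul]
  field_simp

theorem hypWeight_identity {u α β γ : ℝ} (hα : α ≠ 0) (hβ : β ≠ 0) (hγ : γ ≠ 0)
    (hsum : α + β + γ = 2 * u) :
    hypWeight u α * hypWeight u β * hypWeight u γ + hypWeight u α * hypWeight u β +
      hypWeight u β * hypWeight u γ + hypWeight u γ * hypWeight u α = (2 * cosh u) ^ 2 := by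
  have hexp_ne_one {t : ℝ} (ht : t ≠ 0) : exp (2 * t) ≠ 1 := by simpa [exp_eq_one_iff] using ht
  have hprod : exp (2 * α) * exp (2 * β) * exp (2 * γ) = exp (2 * u) ^ 2 := by
    rw [← exp_add, ← exp_add, ← exp_two_mul, ← hsum]
    ring_nf
  rw [hypWeight_eq_rationalWeight u hα, hypWeight_eq_rationalWeight u hβ,
    hypWeight_eq_rationalWeight u hγ, two_cosh_sq]
  exact rationalWeight_identity (exp_ne_zero _) (hexp_ne_one hα) (hexp_ne_one hβ)
    (hexp_ne_one hγ) hprod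

theorem stmt_3_general (q : ℝ) (hq : 4 < q)
    (r : ℝ)
    (hcosh : Real.cosh (r * π) = sqrt q / 2)
    (y : ℝ → ℝ) (hy : ∀ θ ∈ Set.Ioo (0:ℝ) π, y θ = sqrt q * sinh (r * (π - θ)) / sinh (r * θ))
    (a b c : ℝ) (ha : a ∈ Set.Ioo (0:ℝ) π) (hb : b ∈ Set.Ioo (0:ℝ) π)
    (hc : c ∈ Set.Ioo (0:ℝ) π) (habc : a + b + c = 2 * π) :
    y a * y b * y c + y a * y b + y b * y c + y c * y a = q := by
  have hsqrt : sqrt q = 2 * cosh (r * π) := by rw [hcosh]; ring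
  have hr : r ≠ 0 := by
    rintro rfl
    have h4 : sqrt q ^ 2 = q := sq_sqrt (by linarith)
    rw [zero_mul, cosh_zero, eq_div_iff two_ne_zero, one_mul] at hcosh
    rw [← hcosh] at h4
    linarith
  have hy_weight {θ : ℝ} (hθ : θ ∈ Set.Ioo 0 π) : y θ = hypWeight (r * π) (r * θ) := by
    rw [hy θ hθ, hsqrt, hypWeight, mul_sub]
  rw [hy_weight ha, hy_weight hb, hy_weight hc, ← sq_sqrt (by linarith : 0 ≤ q), hsqrt]
  exact hypWeight_identity (mul_ne_zero hr ha.1.ne') (mul_ne_zero hr hb.1.ne')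
    (mul_ne_zero hr hc.1.ne') (by rw [← mul_add, ← mul_add, habc]; ring)

theorem stmt_3 (q : ℝ) (hq : 4 < q)
    (r : ℝ) (hr : r = (1 / π) * arccosh (sqrt q / 2))
    (hcosh : Real.cosh (r * π) = sqrt q / 2)
    (y : ℝ → ℝ) (hy : ∀ θ ∈ Set.Ioo (0:ℝ) π, y θ = sqrt q * sinh (r * (π - θ)) / sinh (r * θ))
    (a b c : ℝ) (ha : a ∈ Set.Ioo (0:ℝ) π) (hb : b ∈ Set.Ioo (0:ℝ) π)
    (hc : c ∈ Set.Ioo (0:ℝ) π) (habc : a + b + c = 2 * π) :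
    y a * y b * y c + y a * y b + y b * y c + y c * y a = q :=
  stmt_3_general q hq r hcosh y hy a b c ha hb hc habc
end
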